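/- arXiv:1003.4365 — 2 statements merged into one kernel-verified Lean document; each statement's English description precedes it below -/
import Mathlib

section
/- Let P = conv{p₀,p₁,p₂} with p₀,p₁,p₂ ∈ ℤ² the only integer points of P, and let Q = conv{q₀,q₁,q₂} be a triangle circumscribed about P with p_i = (1−x_i)q_{i+1} + x_i q_{i+2}, 0 < x_i < 1, and x_i + x_j > 1 for all 0 ≤ i < j ≤ 2. Then the lattice width of Q equals min{x₀,x₁,x₂} / (x₀x₁x₂ + (1−x₀)(1−x₁)(1−x₂)). -/
/-!
An empty lattice triangle is unimodular: its edge vectors `p₁ - p₀`, `p₂ - p₀` form a basis of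
`ℤ²`, since otherwise the fractional parts of the coordinates of some lattice vector (or their
reflection through the midpoint of `p₁p₂`) would give a further lattice point of `P`. So
`u ↦ (a, b) = (⟪u, p₁ - p₀⟫, ⟪u, p₂ - p₀⟫)` is a bijection of `ℤ²`. Each edge of `Q` is an
explicit real combination of `p₁ - p₀` and `p₂ - p₀` divided by
`D = x₀x₁x₂ + (1-x₀)(1-x₁)(1-x₂)`, so the width of `Q` in direction `u` is the maximum of three
linear forms in `(a, b)`, in absolute value, divided by `D`. If this maximum is below
`m = min xᵢ`, then `|a|, |b| ≤ 1` (here `xᵢ + xⱼ > 1` is used), and the eight remaining nonzero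
pairs are checked directly; the value `m` is attained at `(1, 0)`, `(0, 1)` or `(1, 1)`.
-/

open MeasureTheory

noncomputable def dot2 (u x : ℝ × ℝ) : ℝ := u.1 * x.1 + u.2 * x.2

noncomputable def widthFn (K : Set (ℝ × ℝ)) (u : ℝ × ℝ) : ℝ :=
  sSup (dot2 u '' K) - sInf (dot2 u '' K)

noncomputable def latticeWidth (K : Set (ℝ × ℝ)) : ℝ :=
  sInf {w | ∃ u : ℤ × ℤ, u ≠ 0 ∧ w = widthFn K ((u.1 : ℝ), (u.2 : ℝ))}

def IsLatticePoint (p : ℝ × ℝ) : Prop := ∃ z : ℤ × ℤ, p = ((z.1 : ℝ), (z.2 : ℝ))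

def LatticeFree (K : Set (ℝ × ℝ)) : Prop := ∀ p ∈ interior K, ¬ IsLatticePoint p

def CentrallySymmetric (K : Set (ℝ × ℝ)) : Prop := ∃ c : ℝ × ℝ, ∀ x, x ∈ K ↔ (2 : ℝ) • c - x ∈ K

def Covers (t : ℝ) (K : Set (ℝ × ℝ)) : Prop :=
  ∀ p : ℝ × ℝ, ∃ x ∈ K, ∃ z : ℤ × ℤ, p = t • x + ((z.1 : ℝ), (z.2 : ℝ))

noncomputable def mu2 (K : Set (ℝ × ℝ)) : ℝ := sInf {t : ℝ | 0 ≤ t ∧ Covers t K}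

def MeetsAllLines (t : ℝ) (K : Set (ℝ × ℝ)) : Prop :=
  ∀ p v : ℝ × ℝ, v ≠ 0 → ∃ s : ℝ, ∃ x ∈ K, ∃ z : ℤ × ℤ,
    p + s • v = t • x + ((z.1 : ℝ), (z.2 : ℝ))

noncomputable def mu1 (K : Set (ℝ × ℝ)) : ℝ := sInf {t : ℝ | 0 ≤ t ∧ MeetsAllLines t K}

open Set

lemma dot2_add (u y z : ℝ × ℝ) : dot2 u (y + z) = dot2 u y + dot2 u z := by
  simp only [dot2, Prod.fst_add, Prod.snd_add]; ring

lemma dot2_sub (u y z : ℝ × ℝ) : dot2 u (y - z) = dot2 u y - dot2 u z := by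
  simp only [dot2, Prod.fst_sub, Prod.snd_sub]; ring

lemma dot2_smul (u y : ℝ × ℝ) (c : ℝ) : dot2 u (c • y) = c * dot2 u y := by
  simp only [dot2, Prod.smul_fst, Prod.smul_snd, smul_eq_mul]; ring

noncomputable def dot2Linear (u : ℝ × ℝ) : ℝ × ℝ →ₗ[ℝ] ℝ where
  toFun := dot2 u
  map_add' := dot2_add u
  map_smul' c y := dot2_smul u y c

lemma continuous_dot2 (u : ℝ × ℝ) : Continuous (dot2 u) := by
  unfold dot2; fun_prop

lemma abs_sub_le_widthFn {K : Set (ℝ × ℝ)} (hK : IsCompact K) (u : ℝ × ℝ) {y z : ℝ × ℝ}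
    (hy : y ∈ K) (hz : z ∈ K) : |dot2 u y - dot2 u z| ≤ widthFn K u := by
  have himg := hK.image (continuous_dot2 u)
  have hSup : ∀ w ∈ K, dot2 u w ≤ sSup (dot2 u '' K) :=
    fun w hw => le_csSup himg.bddAbove (mem_image_of_mem _ hw)
  have hInf : ∀ w ∈ K, sInf (dot2 u '' K) ≤ dot2 u w :=
    fun w hw => csInf_le himg.bddBelow (mem_image_of_mem _ hw)
  rw [widthFn, abs_sub_le_iff]
  constructor <;> linarith [hSup y hy, hSup z hz, hInf y hy, hInf z hz]

lemma widthFn_le_of_forall_sub_le {K : Set (ℝ × ℝ)} (hK : K.Nonempty) (u : ℝ × ℝ) {c : ℝ}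
    (h : ∀ y ∈ K, ∀ z ∈ K, dot2 u y - dot2 u z ≤ c) : widthFn K u ≤ c := by
  have hSup : sSup (dot2 u '' K) ≤ sInf (dot2 u '' K) + c := by
    refine csSup_le (hK.image _) ?_
    rintro _ ⟨y, hy, rfl⟩
    rw [← sub_le_iff_le_add]
    refine le_csInf (hK.image _) ?_
    rintro _ ⟨z, hz, rfl⟩
    linarith [h y hy z hz]
  rw [widthFn]
  linarith

lemma forall_sub_le_of_mem_convexHull {s : Set (ℝ × ℝ)} (u : ℝ × ℝ) {c : ℝ}
    (h : ∀ y ∈ s, ∀ z ∈ s, dot2 u y - dot2 u z ≤ c) :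
    ∀ y ∈ convexHull ℝ s, ∀ z ∈ convexHull ℝ s, dot2 u y - dot2 u z ≤ c := by
  intro y hy z hz
  have hconv := convex_convexHull ℝ s
  obtain ⟨y', hy', hyy'⟩ :=
    ((dot2Linear u).convexOn hconv).exists_ge_of_mem_convexHull (subset_convexHull ℝ s) hy
  obtain ⟨z', hz', hzz'⟩ :=
    ((dot2Linear u).concaveOn hconv).exists_le_of_mem_convexHull (subset_convexHull ℝ s) hz
  have := h y' hy' z' hz'
  simp only [dot2Linear, LinearMap.coe_mk, AddHom.coe_mk] at hyy' hzz'
  linarith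

lemma widthFn_convexHull_triangle (q : Fin 3 → ℝ × ℝ) (u : ℝ × ℝ) :
    widthFn (convexHull ℝ (range q)) u =
      max |dot2 u (q 1) - dot2 u (q 0)|
        (max |dot2 u (q 2) - dot2 u (q 1)| |dot2 u (q 0) - dot2 u (q 2)|) := by
  have hK : IsCompact (convexHull ℝ (range q)) := (finite_range q).isCompact_convexHull ℝ
  have hq : ∀ i, q i ∈ convexHull ℝ (range q) := fun i => subset_convexHull ℝ _ (mem_range_self i)
  refine le_antisymm ?_ ?_
  · refine widthFn_le_of_forall_sub_le ((range_nonempty q).convexHull) u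
      (forall_sub_le_of_mem_convexHull u ?_)
    rintro _ ⟨i, rfl⟩ _ ⟨j, rfl⟩
    simp only [le_max_iff, le_abs]
    fin_cases i <;> fin_cases j <;> simp <;> grind
  · exact max_le (abs_sub_le_widthFn hK u (hq 1) (hq 0))
      (max_le (abs_sub_le_widthFn hK u (hq 2) (hq 1)) (abs_sub_le_widthFn hK u (hq 0) (hq 2)))

lemma IsLatticePoint.add {y z : ℝ × ℝ} (hy : IsLatticePoint y) (hz : IsLatticePoint z) :
    IsLatticePoint (y + z) := by
  obtain ⟨a, rfl⟩ := hy
  obtain ⟨b, rfl⟩ := hz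
  exact ⟨a + b, by ext <;> simp⟩

lemma IsLatticePoint.sub {y z : ℝ × ℝ} (hy : IsLatticePoint y) (hz : IsLatticePoint z) :
    IsLatticePoint (y - z) := by
  obtain ⟨a, rfl⟩ := hy
  obtain ⟨b, rfl⟩ := hz
  exact ⟨a - b, by ext <;> simp⟩

lemma IsLatticePoint.intCast_smul {y : ℝ × ℝ} (hy : IsLatticePoint y) (n : ℤ) :
    IsLatticePoint ((n : ℝ) • y) := by
  obtain ⟨a, rfl⟩ := hy
  exact ⟨n • a, by ext <;> simp⟩

lemma IsLatticePoint.exists_dot2_eq_intCast {u y : ℝ × ℝ} (hu : IsLatticePoint u)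
    (hy : IsLatticePoint y) : ∃ n : ℤ, dot2 u y = n := by
  obtain ⟨a, rfl⟩ := hu
  obtain ⟨b, rfl⟩ := hy
  exact ⟨a.1 * b.1 + a.2 * b.2, by simp [dot2]⟩

lemma latticeWidth_eq_of_forall_le_of_exists {K : Set (ℝ × ℝ)} {c : ℝ}
    (hle : ∀ u, IsLatticePoint u → u ≠ 0 → c ≤ widthFn K u)
    (hex : ∃ u, IsLatticePoint u ∧ u ≠ 0 ∧ widthFn K u ≤ c) : latticeWidth K = c := by
  have hcast : ∀ z : ℤ × ℤ, z ≠ 0 → ((z.1 : ℝ), (z.2 : ℝ)) ≠ 0 := by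
    rintro z hz h
    simp only [Prod.ext_iff, Prod.fst_zero, Prod.snd_zero, Int.cast_eq_zero] at h
    exact hz (Prod.ext h.1 h.2)
  obtain ⟨_, ⟨z, rfl⟩, hz, hwidth⟩ := hex
  refine IsLeast.csInf_eq ⟨⟨z, ?_, ?_⟩, ?_⟩
  · rintro rfl; exact hz (by simp)
  · exact le_antisymm (hle _ ⟨z, rfl⟩ hz) hwidth
  · rintro _ ⟨w, hw, rfl⟩
    exact hle _ ⟨w, rfl⟩ (hcast w hw)

lemma AffineIndependent.linearIndependent_sub_pair {k E : Type*} [CommRing k] [AddCommGroup E]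
    [Module k E] {p : Fin 3 → E} (hp : AffineIndependent k p) :
    LinearIndependent k ![p 1 - p 0, p 2 - p 0] := by
  refine LinearIndependent.pair_iff.2 fun s t hst => ?_
  have hw := hp.eq_zero_of_sum_eq_zero (s := Finset.univ) (w := ![-s - t, s, t])
    (by simp [Fin.sum_univ_three]; ring) (by
      simp only [Fin.sum_univ_three, Matrix.cons_val_zero, Matrix.cons_val_one,
        Matrix.cons_val_two, Matrix.tail_cons, Matrix.head_cons]
      linear_combination (norm := module) hst)
  exact ⟨hw 1 (Finset.mem_univ _), hw 2 (Finset.mem_univ _)⟩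

lemma exists_smul_add_smul_eq {A B : ℝ × ℝ} (hAB : LinearIndependent ℝ ![A, B]) (E : ℝ × ℝ) :
    ∃ α β : ℝ, α • A + β • B = E := by
  have hspan := hAB.span_eq_top_of_card_eq_finrank (by simp)
  rw [Matrix.range_cons_cons_empty] at hspan
  exact Submodule.mem_span_pair.1 (hspan ▸ Submodule.mem_top)

lemma eq_zero_of_dot2_eq_zero {A B u : ℝ × ℝ} (hAB : LinearIndependent ℝ ![A, B])
    (hA : dot2 u A = 0) (hB : dot2 u B = 0) : u = 0 := by
  obtain ⟨α, β, hu⟩ := exists_smul_add_smul_eq hAB u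
  have huu : dot2 u (α • A + β • B) = 0 := by rw [dot2_add, dot2_smul, dot2_smul, hA, hB]; ring
  rw [hu] at huu
  simp only [dot2] at huu
  ext <;> simp <;> nlinarith [sq_nonneg u.1, sq_nonneg u.2]

section EmptyTriangle

variable {p : Fin 3 → ℝ × ℝ}

lemma vertex_coords_of_isLatticePoint (hind : LinearIndependent ℝ ![p 1 - p 0, p 2 - p 0])
    (honly : ∀ y ∈ convexHull ℝ (range p), IsLatticePoint y → ∃ i, y = p i)
    {s t : ℝ} (hs : 0 ≤ s) (ht : 0 ≤ t) (hst : s + t ≤ 1)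
    (hlat : IsLatticePoint (p 0 + s • (p 1 - p 0) + t • (p 2 - p 0))) :
    (s = 0 ∧ t = 0) ∨ (s = 1 ∧ t = 0) ∨ (s = 0 ∧ t = 1) := by
  have hmem : p 0 + s • (p 1 - p 0) + t • (p 2 - p 0) ∈ convexHull ℝ (range p) := by
    have := (convex_convexHull ℝ (range p)).sum_mem (t := Finset.univ) (w := ![1 - s - t, s, t])
      (z := p) (by intro i _; fin_cases i <;> simp <;> linarith)
      (by simp [Fin.sum_univ_three]; ring) (fun i _ => subset_convexHull ℝ _ (mem_range_self i))
    convert this using 1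
    simp only [Fin.sum_univ_three, Matrix.cons_val_zero, Matrix.cons_val_one,
      Matrix.cons_val_two, Matrix.tail_cons, Matrix.head_cons]
    module
  obtain ⟨i, hi⟩ := honly _ hmem hlat
  fin_cases i <;> simp only [Fin.zero_eta, Fin.mk_one, Fin.reduceFinMk] at hi
  · exact .inl <| hind.eq_of_pair (s' := 0) (t' := 0) <|
      by linear_combination (norm := module) hi
  · exact .inr <| .inl <| hind.eq_of_pair (s' := 1) (t' := 0) <|
      by linear_combination (norm := module) hi
  · exact .inr <| .inr <| hind.eq_of_pair (s' := 0) (t' := 1) <|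
      by linear_combination (norm := module) hi

lemma exists_intCast_smul_add_smul_eq (hpz : ∀ i, IsLatticePoint (p i))
    (hind : LinearIndependent ℝ ![p 1 - p 0, p 2 - p 0])
    (honly : ∀ y ∈ convexHull ℝ (range p), IsLatticePoint y → ∃ i, y = p i)
    {E : ℝ × ℝ} (hE : IsLatticePoint E) :
    ∃ m n : ℤ, (m : ℝ) • (p 1 - p 0) + (n : ℝ) • (p 2 - p 0) = E := by
  obtain ⟨α, β, rfl⟩ := exists_smul_add_smul_eq hind E
  suffices h : Int.fract α = 0 ∧ Int.fract β = 0 by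
    have hα : (⌊α⌋ : ℝ) = α := by linarith [Int.floor_add_fract α]
    have hβ : (⌊β⌋ : ℝ) = β := by linarith [Int.floor_add_fract β]
    exact ⟨⌊α⌋, ⌊β⌋, by rw [hα, hβ]⟩
  have hα0 := Int.fract_nonneg α
  have hα1 := Int.fract_lt_one α
  have hβ0 := Int.fract_nonneg β
  have hβ1 := Int.fract_lt_one β
  have hfract : IsLatticePoint
      (p 0 + Int.fract α • (p 1 - p 0) + Int.fract β • (p 2 - p 0)) := by
    have hsplit : p 0 + Int.fract α • (p 1 - p 0) + Int.fract β • (p 2 - p 0) =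
        p 0 + (α • (p 1 - p 0) + β • (p 2 - p 0)) -
          ((⌊α⌋ : ℝ) • (p 1 - p 0) + (⌊β⌋ : ℝ) • (p 2 - p 0)) := by
      rw [← Int.self_sub_floor, ← Int.self_sub_floor]; module
    rw [hsplit]
    exact ((hpz 0).add hE).sub ((((hpz 1).sub (hpz 0)).intCast_smul _).add
      (((hpz 2).sub (hpz 0)).intCast_smul _))
  rcases le_or_gt (Int.fract α + Int.fract β) 1 with hle | hgt
  · rcases vertex_coords_of_isLatticePoint hind honly hα0 hβ0 hle hfract with h | h | h
    · exact h
    · exact absurd h.1 hα1.ne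
    · exact absurd h.2 hβ1.ne
  -- Otherwise reflect through the midpoint of the edge `p 1 p 2`.
  · have hrefl : IsLatticePoint
        (p 0 + (1 - Int.fract α) • (p 1 - p 0) + (1 - Int.fract β) • (p 2 - p 0)) := by
      have hsplit : p 0 + (1 - Int.fract α) • (p 1 - p 0) + (1 - Int.fract β) • (p 2 - p 0) =
          p 1 + p 2 - (p 0 + Int.fract α • (p 1 - p 0) + Int.fract β • (p 2 - p 0)) := by
        module
      rw [hsplit]
      exact ((hpz 1).add (hpz 2)).sub hfract
    exfalso
    rcases vertex_coords_of_isLatticePoint hind honly (by linarith) (by linarith) (by linarith)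
      hrefl with h | h | h <;> linarith [h.1, h.2]

end EmptyTriangle

lemma exists_isLatticePoint_dot2_eq {A B : ℝ × ℝ} (hAB : LinearIndependent ℝ ![A, B])
    (hgen : ∀ E, IsLatticePoint E → ∃ m n : ℤ, (m : ℝ) • A + (n : ℝ) • B = E) (a b : ℤ) :
    ∃ u, IsLatticePoint u ∧ dot2 u A = a ∧ dot2 u B = b := by
  obtain ⟨m₁, n₁, h₁⟩ := hgen (1, 0) ⟨(1, 0), by simp⟩
  obtain ⟨m₂, n₂, h₂⟩ := hgen (0, 1) ⟨(0, 1), by simp⟩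
  have hcoord (C : ℝ × ℝ) : C = (C.1 * m₁ + C.2 * m₂) • A + (C.1 * n₁ + C.2 * n₂) • B := by
    calc C = C.1 • ((1 : ℝ), (0 : ℝ)) + C.2 • ((0 : ℝ), (1 : ℝ)) := by ext <;> simp
      _ = _ := by rw [← h₁, ← h₂]; module
  obtain ⟨hA₁, hA₂⟩ := hAB.eq_of_pair (s := 1) (t := 0) (s' := A.1 * m₁ + A.2 * m₂)
    (t' := A.1 * n₁ + A.2 * n₂) (by linear_combination (norm := module) hcoord A)
  obtain ⟨hB₁, hB₂⟩ := hAB.eq_of_pair (s := 0) (t := 1) (s' := B.1 * m₁ + B.2 * m₂)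
    (t' := B.1 * n₁ + B.2 * n₂) (by linear_combination (norm := module) hcoord B)
  -- `(m₁, m₂)` and `(n₁, n₂)` are the coordinates of the basis dual to `A, B`.
  refine ⟨_, ⟨(a * m₁ + b * n₁, a * m₂ + b * n₂), rfl⟩, ?_, ?_⟩ <;> simp only [dot2] <;> push_cast
  · linear_combination (-a : ℝ) * hA₁ - b * hA₂
  · linear_combination (-a : ℝ) * hB₁ - b * hB₂

/-- `D = x₀x₁x₂ + (1-x₀)(1-x₁)(1-x₂)` times the width of the circumscribed triangle in a
direction `u` with `⟪u, p₁ - p₀⟫ = a` and `⟪u, p₂ - p₀⟫ = b`. -/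
noncomputable def scaledWidth (x : Fin 3 → ℝ) (a b : ℝ) : ℝ :=
  max |-x 0 * a + (x 0 + x 1 - 1) * b|
    (max |(1 - x 2) * a - x 1 * b| |(x 0 + x 2 - 1) * a + (1 - x 0) * b|)

section Weights

variable {x : Fin 3 → ℝ}

lemma denom_pos (hx : ∀ i, 0 < x i ∧ x i < 1) :
    0 < x 0 * x 1 * x 2 + (1 - x 0) * (1 - x 1) * (1 - x 2) := by
  obtain ⟨⟨h0, h0'⟩, ⟨h1, h1'⟩, ⟨h2, h2'⟩⟩ := And.intro (hx 0) (And.intro (hx 1) (hx 2))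
  have : 0 < (1 - x 0) * (1 - x 1) * (1 - x 2) := by
    apply mul_pos (mul_pos _ _) <;> linarith
  positivity

lemma mul_le_two_mul_denom {a b c : ℝ} (ha : 0 ≤ a) (ha' : a ≤ 1) (hb : 0 ≤ b) (hb' : b ≤ 1)
    (hc : 1 / 2 ≤ c) (hc' : c ≤ 1) :
    a * b ≤ 2 * (a * b * c + (1 - a) * (1 - b) * (1 - c)) := by
  linarith [mul_nonneg (mul_nonneg ha hb) (by linarith : 0 ≤ 2 * c - 1),
    mul_nonneg (mul_nonneg (sub_nonneg.2 ha') (sub_nonneg.2 hb')) (sub_nonneg.2 hc')]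

lemma mul_min_le_two_mul_denom (hx : ∀ i, 0 < x i ∧ x i < 1)
    (hsum : ∀ i j, i ≠ j → 1 < x i + x j) :
    x 1 * min (x 0) (min (x 1) (x 2)) ≤
        2 * (x 0 * x 1 * x 2 + (1 - x 0) * (1 - x 1) * (1 - x 2)) ∧
      x 0 * min (x 0) (min (x 1) (x 2)) ≤
        2 * (x 0 * x 1 * x 2 + (1 - x 0) * (1 - x 1) * (1 - x 2)) := by
  obtain ⟨⟨h0, h0'⟩, ⟨h1, h1'⟩, ⟨h2, h2'⟩⟩ := And.intro (hx 0) (And.intro (hx 1) (hx 2))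
  have h02 := hsum 0 2 (by decide)
  have h12 := hsum 1 2 (by decide)
  have hm0 : min (x 0) (min (x 1) (x 2)) ≤ x 0 := min_le_left _ _
  have hm1 : min (x 0) (min (x 1) (x 2)) ≤ x 1 := (min_le_right _ _).trans (min_le_left _ _)
  have hm2 : min (x 0) (min (x 1) (x 2)) ≤ x 2 := (min_le_right _ _).trans (min_le_right _ _)
  -- At most one weight is below `1 / 2`.
  constructor
  · rcases le_or_gt (1 / 2) (x 0) with h | h
    · linarith [mul_le_two_mul_denom h1.le h1'.le h2.le h2'.le h h0'.le,
        mul_le_mul_of_nonneg_left hm2 h1.le]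
    · linarith [mul_le_two_mul_denom h0.le h0'.le h1.le h1'.le (by linarith) h2'.le,
        mul_le_mul_of_nonneg_left hm0 h1.le]
  · rcases le_or_gt (1 / 2) (x 1) with h | h
    · linarith [mul_le_two_mul_denom h0.le h0'.le h2.le h2'.le h h1'.le,
        mul_le_mul_of_nonneg_left hm2 h0.le]
    · linarith [mul_le_two_mul_denom h0.le h0'.le h1.le h1'.le (by linarith) h2'.le,
        mul_le_mul_of_nonneg_left hm1 h0.le]

lemma abs_le_one_of_scaledWidth_lt (hx : ∀ i, 0 < x i ∧ x i < 1)
    (hsum : ∀ i j, i ≠ j → 1 < x i + x j) {a b : ℤ}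
    (h : scaledWidth x a b < min (x 0) (min (x 1) (x 2))) : |a| ≤ 1 ∧ |b| ≤ 1 := by
  obtain ⟨⟨h0, h0'⟩, ⟨h1, h1'⟩, ⟨h2, h2'⟩⟩ := And.intro (hx 0) (And.intro (hx 1) (hx 2))
  have h01 := hsum 0 1 (by decide)
  have h02 := hsum 0 2 (by decide)
  obtain ⟨hxm1, hxm0⟩ := mul_min_le_two_mul_denom hx hsum
  have hD := denom_pos hx
  set D := x 0 * x 1 * x 2 + (1 - x 0) * (1 - x 1) * (1 - x 2)
  set m := min (x 0) (min (x 1) (x 2))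
  simp only [scaledWidth, max_lt_iff, abs_lt] at h
  obtain ⟨⟨e01, e01'⟩, ⟨e12, e12'⟩, ⟨e20, e20'⟩⟩ := h
  -- `D a = (x₀ - 1) e₀₁ + (x₀ + x₁ - 1) e₂₀` has absolute value `< x₁ m`, and similarly
  -- `D b = (1 - x₀ - x₂) e₁₂ + (1 - x₂) e₂₀` has absolute value `< x₀ m`.
  have ha : |D * a| < 2 * D := by
    refine (abs_lt.2 ⟨?_, ?_⟩).trans_le hxm1 <;>
      linarith [mul_pos (sub_pos.2 h0') (sub_pos.2 e01'),
        mul_pos (sub_pos.2 h0') (neg_lt_iff_pos_add.1 e01),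
        mul_pos (sub_pos.2 h01) (sub_pos.2 e20'),
        mul_pos (sub_pos.2 h01) (neg_lt_iff_pos_add.1 e20)]
  have hb : |D * b| < 2 * D := by
    refine (abs_lt.2 ⟨?_, ?_⟩).trans_le hxm0 <;>
      linarith [mul_pos (sub_pos.2 h2') (sub_pos.2 e20'),
        mul_pos (sub_pos.2 h2') (neg_lt_iff_pos_add.1 e20),
        mul_pos (sub_pos.2 h02) (sub_pos.2 e12'),
        mul_pos (sub_pos.2 h02) (neg_lt_iff_pos_add.1 e12)]
  rw [abs_mul, abs_of_pos hD, mul_comm, mul_lt_mul_iff_left₀ hD, ← Int.cast_abs] at ha hb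
  constructor
  · have : |a| < 2 := by exact_mod_cast ha
    omega
  · have : |b| < 2 := by exact_mod_cast hb
    omega

lemma min_le_scaledWidth (hx : ∀ i, 0 < x i ∧ x i < 1)
    (hsum : ∀ i j, i ≠ j → 1 < x i + x j) {a b : ℤ} (hab : a ≠ 0 ∨ b ≠ 0) :
    min (x 0) (min (x 1) (x 2)) ≤ scaledWidth x a b := by
  have h01 := hsum 0 1 (by decide)
  have h02 := hsum 0 2 (by decide)
  have h12 := hsum 1 2 (by decide)
  by_contra! h
  obtain ⟨ha, hb⟩ := abs_le_one_of_scaledWidth_lt hx hsum h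
  rw [abs_le] at ha hb
  have hm0 : min (x 0) (min (x 1) (x 2)) ≤ x 0 := min_le_left _ _
  have hm1 : min (x 0) (min (x 1) (x 2)) ≤ x 1 := (min_le_right _ _).trans (min_le_left _ _)
  have hm2 : min (x 0) (min (x 1) (x 2)) ≤ x 2 := (min_le_right _ _).trans (min_le_right _ _)
  simp only [scaledWidth, max_lt_iff, abs_lt] at h
  obtain ⟨⟨e01, e01'⟩, ⟨e12, e12'⟩, ⟨e20, e20'⟩⟩ := h
  obtain ⟨ha₀, ha₁⟩ := ha
  obtain ⟨hb₀, hb₁⟩ := hb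
  interval_cases a <;> interval_cases b
  all_goals first
    | (simp at hab; done)
    | (push_cast at e01 e01' e12 e12' e20 e20'; linarith)

lemma exists_scaledWidth_le (hx : ∀ i, 0 < x i ∧ x i < 1) (hsum : ∀ i j, i ≠ j → 1 < x i + x j) :
    ∃ a b : ℤ, (a ≠ 0 ∨ b ≠ 0) ∧ scaledWidth x a b ≤ min (x 0) (min (x 1) (x 2)) := by
  have h01 := hsum 0 1 (by decide)
  have h02 := hsum 0 2 (by decide)
  have h12 := hsum 1 2 (by decide)
  obtain ⟨⟨h0, h0'⟩, ⟨h1, h1'⟩, ⟨h2, h2'⟩⟩ := And.intro (hx 0) (And.intro (hx 1) (hx 2))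
  rcases le_total (x 0) (min (x 1) (x 2)) with h | h
  · obtain ⟨hx01, hx02⟩ := le_min_iff.1 h
    refine ⟨1, 0, by simp, ?_⟩
    rw [min_eq_left h]
    simp only [scaledWidth, max_le_iff, abs_le, Int.cast_one, Int.cast_zero]
    refine ⟨⟨?_, ?_⟩, ⟨?_, ?_⟩, ?_, ?_⟩ <;> linarith
  · rw [min_eq_right h]
    rcases le_total (x 1) (x 2) with h' | h'
    · rw [min_eq_left h'] at h ⊢
      refine ⟨0, 1, by simp, ?_⟩
      simp only [scaledWidth, max_le_iff, abs_le, Int.cast_one, Int.cast_zero]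
      refine ⟨⟨?_, ?_⟩, ⟨?_, ?_⟩, ?_, ?_⟩ <;> linarith
    · rw [min_eq_right h'] at h ⊢
      refine ⟨1, 1, by simp, ?_⟩
      simp only [scaledWidth, max_le_iff, abs_le, Int.cast_one]
      refine ⟨⟨?_, ?_⟩, ⟨?_, ?_⟩, ?_, ?_⟩ <;> linarith

end Weights

lemma widthFn_eq_scaledWidth_div {p q : Fin 3 → ℝ × ℝ} {x : Fin 3 → ℝ}
    (hx : ∀ i, 0 < x i ∧ x i < 1) (hpq : ∀ i, p i = (1 - x i) • q (i + 1) + x i • q (i + 2))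
    (u : ℝ × ℝ) :
    widthFn (convexHull ℝ (range q)) u =
      scaledWidth x (dot2 u (p 1 - p 0)) (dot2 u (p 2 - p 0)) /
        (x 0 * x 1 * x 2 + (1 - x 0) * (1 - x 1) * (1 - x 2)) := by
  have hD := denom_pos hx
  have hp (i : Fin 3) :
      dot2 u (p i) = (1 - x i) * dot2 u (q (i + 1)) + x i * dot2 u (q (i + 2)) := by
    rw [hpq i, dot2_add, dot2_smul, dot2_smul]
  have hp0 := hp 0
  have hp1 := hp 1
  have hp2 := hp 2
  simp only [Fin.reduceAdd] at hp0 hp1 hp2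
  have e01 : dot2 u (q 1) - dot2 u (q 0) = (-x 0 * (dot2 u (p 1) - dot2 u (p 0)) +
      (x 0 + x 1 - 1) * (dot2 u (p 2) - dot2 u (p 0))) /
        (x 0 * x 1 * x 2 + (1 - x 0) * (1 - x 1) * (1 - x 2)) := by
    rw [eq_div_iff hD.ne']
    linear_combination (x 1 - 1) * hp0 + x 0 * hp1 - (x 0 + x 1 - 1) * hp2
  have e12 : dot2 u (q 2) - dot2 u (q 1) = ((1 - x 2) * (dot2 u (p 1) - dot2 u (p 0)) -
      x 1 * (dot2 u (p 2) - dot2 u (p 0))) /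
        (x 0 * x 1 * x 2 + (1 - x 0) * (1 - x 1) * (1 - x 2)) := by
    rw [eq_div_iff hD.ne']
    linear_combination (1 - x 2 - x 1) * hp0 - (1 - x 2) * hp1 + x 1 * hp2
  have e20 : dot2 u (q 0) - dot2 u (q 2) = ((x 0 + x 2 - 1) * (dot2 u (p 1) - dot2 u (p 0)) +
      (1 - x 0) * (dot2 u (p 2) - dot2 u (p 0))) /
        (x 0 * x 1 * x 2 + (1 - x 0) * (1 - x 1) * (1 - x 2)) := by
    rw [eq_div_iff hD.ne']
    linear_combination x 2 * hp0 + (1 - x 2 - x 0) * hp1 + (x 0 - 1) * hp2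
  rw [widthFn_convexHull_triangle, e01, e12, e20, abs_div, abs_div, abs_div, abs_of_pos hD,
    max_div_div_right hD.le, max_div_div_right hD.le, scaledWidth, dot2_sub, dot2_sub]

theorem latticeWidth_triangle_formula (p q : Fin 3 → ℝ × ℝ) (x : Fin 3 → ℝ)
    (hpz : ∀ i, IsLatticePoint (p i)) (haff : AffineIndependent ℝ p)
    (honly : ∀ y ∈ convexHull ℝ (Set.range p), IsLatticePoint y → ∃ i, y = p i)
    (hx : ∀ i, 0 < x i ∧ x i < 1)
    (hpq : ∀ i, p i = (1 - x i) • q (i + 1) + x i • q (i + 2))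
    (ha : ∀ i j : Fin 3, i ≠ j → 1 < x i + x j) :
    latticeWidth (convexHull ℝ (Set.range q)) =
      min (x 0) (min (x 1) (x 2)) /
        (x 0 * x 1 * x 2 + (1 - x 0) * (1 - x 1) * (1 - x 2)) := by
  have hind := haff.linearIndependent_sub_pair
  have hD := denom_pos hx
  have hA := (hpz 1).sub (hpz 0)
  have hB := (hpz 2).sub (hpz 0)
  refine latticeWidth_eq_of_forall_le_of_exists (fun u hu hu0 => ?_) ?_
  · obtain ⟨a, ha'⟩ := hu.exists_dot2_eq_intCast hA
    obtain ⟨b, hb'⟩ := hu.exists_dot2_eq_intCast hB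
    have hab : a ≠ 0 ∨ b ≠ 0 := by
      by_contra! h
      exact hu0 (eq_zero_of_dot2_eq_zero hind (by simp [ha', h.1]) (by simp [hb', h.2]))
    rw [widthFn_eq_scaledWidth_div hx hpq, ha', hb']
    exact div_le_div_of_nonneg_right (min_le_scaledWidth hx ha hab) hD.le
  · obtain ⟨a, b, hab, hle⟩ := exists_scaledWidth_le hx ha
    obtain ⟨u, hu, huA, huB⟩ := exists_isLatticePoint_dot2_eq hind
      (fun E hE => exists_intCast_smul_add_smul_eq hpz hind honly hE) a b
    refine ⟨u, hu, ?_, ?_⟩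
    · rintro rfl
      obtain ⟨rfl, rfl⟩ : a = 0 ∧ b = 0 := by simpa [dot2, eq_comm] using And.intro huA huB
      simp at hab
    · rw [widthFn_eq_scaledWidth_div hx hpq, huA, huB]
      exact div_le_div_of_nonneg_right hle hD.le
end

section
/- Let P = conv{p₀,p₁,p₂} with p₀,p₁,p₂ ∈ ℤ² the only integer points of P, and let Q = conv{q₀,q₁,q₂} be circumscribed about P with p_i = (1−x_i)q_{i+1} + x_i q_{i+2} and 0 < x_i < 1. Then the area of Q equals 1/(2·(x₀x₁x₂ + (1−x₀)(1−x₁)(1−x₂))). -/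
open MeasureTheory

/-!
The triangle `Q` is the image of the standard triangle under an affine map with linear part
`z ↦ z.1 • (q₁ - q₀) + z.2 • (q₂ - q₀)`, so its area is `|det (q₁ - q₀, q₂ - q₀)| / 2`.
Substituting `pᵢ = (1 - xᵢ) qᵢ₊₁ + xᵢ qᵢ₊₂` multiplies that determinant by
`x₀x₁x₂ + (1 - x₀)(1 - x₁)(1 - x₂)`, and `det (p₁ - p₀, p₂ - p₀) = ±1` because a lattice triangle
with no lattice points besides its vertices is unimodular: if some lattice vector had non-integral
coordinates with respect to `p₁ - p₀, p₂ - p₀`, their fractional parts (reflected through the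
midpoint of `p₁p₂` when they sum to more than `1`) would give a lattice point of `P` that is not
a vertex.
-/

open Set Pointwise

def cross (u v : ℝ × ℝ) : ℝ := u.1 * v.2 - u.2 * v.1

def pairCombination (u v : ℝ × ℝ) : (ℝ × ℝ) →ₗ[ℝ] ℝ × ℝ :=
  (LinearMap.fst ℝ ℝ ℝ).smulRight u + (LinearMap.snd ℝ ℝ ℝ).smulRight v

lemma pairCombination_apply (u v z : ℝ × ℝ) : pairCombination u v z = z.1 • u + z.2 • v := rfl

lemma det_pairCombination (u v : ℝ × ℝ) : LinearMap.det (pairCombination u v) = cross u v := by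
  rw [← LinearMap.det_toMatrix (Module.Basis.finTwoProd ℝ), Matrix.det_fin_two]
  simp [LinearMap.toMatrix_apply, pairCombination_apply, cross, mul_comm]

lemma cross_pairCombination (u v z w : ℝ × ℝ) :
    cross (pairCombination u v z) (pairCombination u v w) = cross z w * cross u v := by
  simp only [cross, pairCombination_apply, Prod.fst_add, Prod.snd_add, Prod.smul_fst,
    Prod.smul_snd, smul_eq_mul]
  ring

lemma bijective_pairCombination {u v : ℝ × ℝ} (h : cross u v ≠ 0) :
    Function.Bijective (pairCombination u v) :=
  (LinearMap.equivOfDetNeZero (pairCombination u v) (by rwa [det_pairCombination])).bijective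

def stdTriangle : Set (ℝ × ℝ) := {z | 0 ≤ z.1 ∧ 0 ≤ z.2 ∧ z.1 + z.2 ≤ 1}

def stdVertex : Fin 3 → ℝ × ℝ := ![(0, 0), (1, 0), (0, 1)]

lemma add_pairCombination_stdVertex (q : Fin 3 → ℝ × ℝ) (i : Fin 3) :
    q 0 + pairCombination (q 1 - q 0) (q 2 - q 0) (stdVertex i) = q i := by
  fin_cases i <;> simp [stdVertex, pairCombination_apply]

lemma convexHull_stdVertex : convexHull ℝ (range stdVertex) = stdTriangle := by
  apply le_antisymm
  · refine convexHull_min ?_ ?_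
    · rintro _ ⟨i, rfl⟩
      fin_cases i <;> simp [stdVertex, stdTriangle]
    · rintro x ⟨hx1, hx2, hx3⟩ y ⟨hy1, hy2, hy3⟩ a b ha hb hab
      simp only [stdTriangle, mem_ofPred_eq, Prod.fst_add, Prod.snd_add, Prod.smul_fst,
        Prod.smul_snd, smul_eq_mul]
      refine ⟨by positivity, by positivity, by nlinarith⟩
  · rintro z ⟨hz1, hz2, hz3⟩
    refine mem_convexHull_of_exists_fintype ![1 - z.1 - z.2, z.1, z.2] stdVertex ?_ ?_
      (fun i => mem_range_self i) ?_
    · intro i; fin_cases i <;> simp <;> linarith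
    · simp [Fin.sum_univ_three]; ring
    · simp [Fin.sum_univ_three, stdVertex]

lemma convexHull_range_eq_vadd_image (q : Fin 3 → ℝ × ℝ) :
    convexHull ℝ (range q) = q 0 +ᵥ pairCombination (q 1 - q 0) (q 2 - q 0) '' stdTriangle := by
  rw [← convexHull_stdVertex, LinearMap.image_convexHull, ← convexHull_vadd, ← image_vadd,
    ← range_comp, ← range_comp]
  congr 2
  funext i
  exact (add_pairCombination_stdVertex q i).symm

lemma measurableSet_stdTriangle : MeasurableSet stdTriangle :=
  (measurableSet_le measurable_const measurable_fst).inter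
    ((measurableSet_le measurable_const measurable_snd).inter
      (measurableSet_le (measurable_fst.add measurable_snd) measurable_const))

lemma volume_stdTriangle_slice (a : ℝ) : volume (Prod.mk a ⁻¹' stdTriangle) =
    (Icc 0 1).indicator (fun a => ENNReal.ofReal (1 - a)) a := by
  rcases lt_or_ge a 0 with ha | ha
  · have hempty : Prod.mk a ⁻¹' stdTriangle = ∅ := by
      ext b; simp only [stdTriangle, mem_preimage, mem_ofPred_eq, mem_empty_iff_false, iff_false]
      intro h; linarith [h.1]
    rw [hempty, measure_empty, indicator_of_notMem (fun h => (h.1.trans_lt ha).false)]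
  · have hIcc : Prod.mk a ⁻¹' stdTriangle = Icc 0 (1 - a) := by
      ext b; simp only [stdTriangle, mem_preimage, mem_ofPred_eq, mem_Icc]
      constructor
      · rintro ⟨-, hb, hab⟩; exact ⟨hb, by linarith⟩
      · rintro ⟨hb, hab⟩; exact ⟨ha, hb, by linarith⟩
    rw [hIcc, Real.volume_Icc, sub_zero]
    by_cases ha1 : a ≤ 1
    · rw [indicator_of_mem (show a ∈ Icc (0 : ℝ) 1 from ⟨ha, ha1⟩)]
    · rw [indicator_of_notMem (fun h => ha1 h.2), ENNReal.ofReal_eq_zero]; linarith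

lemma volume_stdTriangle : volume stdTriangle = ENNReal.ofReal (1 / 2) := by
  rw [Measure.volume_eq_prod, Measure.prod_apply measurableSet_stdTriangle,
    lintegral_congr volume_stdTriangle_slice, lintegral_indicator measurableSet_Icc,
    ← ofReal_integral_eq_lintegral_ofReal, integral_Icc_eq_integral_Ioc,
    ← intervalIntegral.integral_of_le zero_le_one]
  · rw [intervalIntegral.integral_sub intervalIntegrable_const
      intervalIntegral.intervalIntegrable_id]
    norm_num
  · exact (continuous_const.sub continuous_id).integrableOn_Icc
  · filter_upwards [ae_restrict_mem measurableSet_Icc] with a ha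
    exact sub_nonneg.2 ha.2

lemma volume_convexHull_range_fin_three (q : Fin 3 → ℝ × ℝ) :
    volume (convexHull ℝ (range q)) = ENNReal.ofReal (|cross (q 1 - q 0) (q 2 - q 0)| / 2) := by
  rw [convexHull_range_eq_vadd_image, measure_vadd, Measure.addHaar_image_linearMap,
    det_pairCombination, volume_stdTriangle, ← ENNReal.ofReal_mul (abs_nonneg _), mul_one_div]

lemma cross_ne_zero_of_affineIndependent {p : Fin 3 → ℝ × ℝ} (hp : AffineIndependent ℝ p) :
    cross (p 1 - p 0) (p 2 - p 0) ≠ 0 := by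
  set u := p 1 - p 0 with hu
  set v := p 2 - p 0 with hv
  have hcoef : ∀ a b : ℝ, a * u.1 + b * v.1 = 0 → a * u.2 + b * v.2 = 0 → a = 0 ∧ b = 0 := by
    intro a b h₁ h₂
    have hab : a • u + b • v = 0 := Prod.ext h₁ h₂
    have hw := hp.eq_zero_of_sum_eq_zero (s := Finset.univ) (w := ![-(a + b), a, b])
      (by simp [Fin.sum_univ_three]) (by simp [Fin.sum_univ_three]; rw [← hab, hu, hv]; module)
    exact ⟨hw 1 (Finset.mem_univ _), hw 2 (Finset.mem_univ _)⟩
  intro h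
  simp only [cross] at h
  have hu₂ : u.2 = 0 :=
    neg_eq_zero.1 (hcoef v.2 (-u.2) (by linear_combination h) (by ring)).2
  have hu₁ : u.1 = 0 :=
    neg_eq_zero.1 (hcoef v.1 (-u.1) (by ring) (by linear_combination -h)).2
  exact one_ne_zero (hcoef 1 0 (by simp [hu₁]) (by simp [hu₂])).1

namespace IsLatticePoint

variable {u v : ℝ × ℝ}

lemma add_s15 (hu : IsLatticePoint u) (hv : IsLatticePoint v) : IsLatticePoint (u + v) := by
  obtain ⟨a, rfl⟩ := hu
  obtain ⟨b, rfl⟩ := hv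
  exact ⟨a + b, by simp⟩

lemma sub_s15 (hu : IsLatticePoint u) (hv : IsLatticePoint v) : IsLatticePoint (u - v) := by
  obtain ⟨a, rfl⟩ := hu
  obtain ⟨b, rfl⟩ := hv
  exact ⟨a - b, by simp⟩

lemma intCast_smul_s15 (hu : IsLatticePoint u) (n : ℤ) : IsLatticePoint ((n : ℝ) • u) := by
  obtain ⟨a, rfl⟩ := hu
  exact ⟨n • a, by simp⟩

lemma exists_cross_eq_intCast (hu : IsLatticePoint u) (hv : IsLatticePoint v) :
    ∃ n : ℤ, cross u v = n := by
  obtain ⟨a, rfl⟩ := hu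
  obtain ⟨b, rfl⟩ := hv
  exact ⟨a.1 * b.2 - a.2 * b.1, by simp [cross]⟩

end IsLatticePoint

section EmptyTriangle

variable {p : Fin 3 → ℝ × ℝ}

lemma exists_eq_stdVertex_of_isLatticePoint (hcross : cross (p 1 - p 0) (p 2 - p 0) ≠ 0)
    (honly : ∀ y ∈ convexHull ℝ (range p), IsLatticePoint y → ∃ i, y = p i)
    {z : ℝ × ℝ} (hz : z ∈ stdTriangle)
    (hlat : IsLatticePoint (p 0 + pairCombination (p 1 - p 0) (p 2 - p 0) z)) :
    ∃ i, z = stdVertex i := by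
  have hmem : p 0 + pairCombination (p 1 - p 0) (p 2 - p 0) z ∈ convexHull ℝ (range p) := by
    rw [convexHull_range_eq_vadd_image]
    exact vadd_mem_vadd_set (mem_image_of_mem _ hz)
  obtain ⟨i, hi⟩ := honly _ hmem hlat
  rw [← add_pairCombination_stdVertex p i] at hi
  exact ⟨i, (bijective_pairCombination hcross).1 (add_left_cancel hi)⟩

lemma isLatticePoint_of_isLatticePoint_pairCombination (hpz : ∀ i, IsLatticePoint (p i))
    (hcross : cross (p 1 - p 0) (p 2 - p 0) ≠ 0)
    (honly : ∀ y ∈ convexHull ℝ (range p), IsLatticePoint y → ∃ i, y = p i)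
    {z : ℝ × ℝ} (hz : IsLatticePoint (pairCombination (p 1 - p 0) (p 2 - p 0) z)) :
    IsLatticePoint z := by
  set L := pairCombination (p 1 - p 0) (p 2 - p 0) with hL
  set s := Int.fract z.1 with hs
  set t := Int.fract z.2 with ht
  have hfract : L (s, t) = L z - (⌊z.1⌋ : ℝ) • (p 1 - p 0) - (⌊z.2⌋ : ℝ) • (p 2 - p 0) := by
    simp only [hL, pairCombination_apply, hs, ht, Int.fract]
    module
  have hlat : IsLatticePoint (p 0 + L (s, t)) := by
    rw [hfract]
    exact (hpz 0).add_s15 ((hz.sub_s15 (((hpz 1).sub_s15 (hpz 0)).intCast_smul_s15 _)).sub_s15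
      (((hpz 2).sub_s15 (hpz 0)).intCast_smul_s15 _))
  have hs0 := Int.fract_nonneg z.1
  have hs1 := Int.fract_lt_one z.1
  have ht0 := Int.fract_nonneg z.2
  have ht1 := Int.fract_lt_one z.2
  rcases le_or_gt (s + t) 1 with hst | hst
  · obtain ⟨i, hi⟩ := exists_eq_stdVertex_of_isLatticePoint hcross honly ⟨hs0, ht0, hst⟩ hlat
    have hst0 : s = 0 ∧ t = 0 := by
      fin_cases i <;> simp [stdVertex, Prod.ext_iff] at hi <;>
        exact ⟨by linarith [hi.1, hi.2], by linarith [hi.1, hi.2]⟩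
    exact ⟨(⌊z.1⌋, ⌊z.2⌋), Prod.ext (by linarith [Int.floor_add_fract z.1])
      (by linarith [Int.floor_add_fract z.2])⟩
  · have hlat' : IsLatticePoint (p 0 + L (1 - s, 1 - t)) := by
      have : p 0 + L (1 - s, 1 - t) = p 1 + p 2 - (p 0 + L (s, t)) := by
        simp only [hL, pairCombination_apply]; module
      rw [this]
      exact ((hpz 1).add_s15 (hpz 2)).sub_s15 hlat
    obtain ⟨i, hi⟩ := exists_eq_stdVertex_of_isLatticePoint hcross honly
      ⟨by linarith, by linarith, by linarith⟩ hlat'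
    fin_cases i <;> simp [stdVertex, Prod.ext_iff] at hi <;> linarith

lemma abs_cross_eq_one (hpz : ∀ i, IsLatticePoint (p i))
    (hcross : cross (p 1 - p 0) (p 2 - p 0) ≠ 0)
    (honly : ∀ y ∈ convexHull ℝ (range p), IsLatticePoint y → ∃ i, y = p i) :
    |cross (p 1 - p 0) (p 2 - p 0)| = 1 := by
  obtain ⟨n, hn⟩ := ((hpz 1).sub_s15 (hpz 0)).exists_cross_eq_intCast ((hpz 2).sub_s15 (hpz 0))
  obtain ⟨e₁, he₁⟩ := (bijective_pairCombination hcross).2 (1, 0)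
  obtain ⟨e₂, he₂⟩ := (bijective_pairCombination hcross).2 (0, 1)
  have hlat : ∀ e, IsLatticePoint (pairCombination (p 1 - p 0) (p 2 - p 0) e) →
      IsLatticePoint e := fun _ => isLatticePoint_of_isLatticePoint_pairCombination hpz hcross honly
  obtain ⟨m, hm⟩ := (hlat e₁ ⟨(1, 0), by simpa using he₁⟩).exists_cross_eq_intCast
    (hlat e₂ ⟨(0, 1), by simpa using he₂⟩)
  have hmn : n * m = 1 := by
    have : (n * m : ℝ) = 1 := by
      rw [← hn, ← hm, mul_comm, ← cross_pairCombination, he₁, he₂]; simp [cross]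
    exact_mod_cast this
  rcases Int.eq_one_or_neg_one_of_mul_eq_one hmn with h | h <;> simp [hn, h]

end EmptyTriangle

lemma cross_eq_mul_cross_of_inscribed {p q : Fin 3 → ℝ × ℝ} {x : Fin 3 → ℝ}
    (hpq : ∀ i, p i = (1 - x i) • q (i + 1) + x i • q (i + 2)) :
    cross (p 1 - p 0) (p 2 - p 0) =
      (x 0 * x 1 * x 2 + (1 - x 0) * (1 - x 1) * (1 - x 2)) * cross (q 1 - q 0) (q 2 - q 0) := by
  have h0 : p 0 = (1 - x 0) • q 1 + x 0 • q 2 := hpq 0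
  have h1 : p 1 = (1 - x 1) • q 2 + x 1 • q 0 := hpq 1
  have h2 : p 2 = (1 - x 2) • q 0 + x 2 • q 1 := hpq 2
  simp only [cross, h0, h1, h2, Prod.fst_sub, Prod.snd_sub, Prod.fst_add, Prod.snd_add,
    Prod.smul_fst, Prod.smul_snd, smul_eq_mul]
  ring

theorem area_triangle_formula (p q : Fin 3 → ℝ × ℝ) (x : Fin 3 → ℝ)
    (hpz : ∀ i, IsLatticePoint (p i)) (haff : AffineIndependent ℝ p)
    (honly : ∀ y ∈ convexHull ℝ (Set.range p), IsLatticePoint y → ∃ i, y = p i)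
    (hx : ∀ i, 0 < x i ∧ x i < 1)
    (hpq : ∀ i, p i = (1 - x i) • q (i + 1) + x i • q (i + 2)) :
    (MeasureTheory.volume (convexHull ℝ (Set.range q))).toReal =
      1 / (2 * (x 0 * x 1 * x 2 + (1 - x 0) * (1 - x 1) * (1 - x 2))) := by
  have hΔ : 0 < x 0 * x 1 * x 2 + (1 - x 0) * (1 - x 1) * (1 - x 2) := by
    have hpos := fun i => (hx i).1
    have hpos' := fun i => sub_pos.2 (hx i).2
    exact add_pos (mul_pos (mul_pos (hpos 0) (hpos 1)) (hpos 2))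
      (mul_pos (mul_pos (hpos' 0) (hpos' 1)) (hpos' 2))
  have hunimod := abs_cross_eq_one hpz (cross_ne_zero_of_affineIndependent haff) honly
  rw [cross_eq_mul_cross_of_inscribed hpq, abs_mul, abs_of_pos hΔ] at hunimod
  rw [volume_convexHull_range_fin_three, ENNReal.toReal_ofReal (by positivity)]
  field_simp
  linarith
end
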